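/- arXiv:1701.06396 — 2 statements merged into one kernel-verified Lean document; each statement's English description precedes it below -/
import Mathlib

section
/- For ε_m(ω) the Drude permittivity with parameters ε_0, ε_∞, ω_P, Γ > 0, every complex root ω of ε_m(ω)/ε_s = k with ε_s > 0 and k ≤ 0 has strictly negative imaginary part. -/
open Complex

/-!
Clearing denominators, a root `ω` makes `ω ^ 2 + i Γ ω` equal to the positive real number
`ε₀ ω_P² / (ε₀ ε_∞ - k ε_s)`. Writing `ω = x + i y`, the imaginary part gives `x (2 y + Γ) = 0`
and the real part `x² - y² - Γ y > 0`: either `y = -Γ / 2`, or `x = 0` and `y (y + Γ) < 0`,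
so `-Γ < y < 0`.
-/

theorem im_neg_of_sq_add_I_mul_eq_pos {Γ c : ℝ} (hΓ : 0 < Γ) (hc : 0 < c) {ω : ℂ}
    (h : ω ^ 2 + I * ω * (Γ : ℂ) = c) : ω.im < 0 := by
  have hre := congrArg re h
  have him := congrArg im h
  simp only [sq, add_re, add_im, mul_im, mul_re, I_re, I_im, ofReal_re, ofReal_im] at hre him
  have hfactor : ω.re * (2 * ω.im + Γ) = 0 := by linear_combination him
  rcases mul_eq_zero.mp hfactor with hx | hy
  · nlinarith [sq_nonneg ω.im]
  · linarith

theorem mul_sub_eq_of_mul_sub_div_div_eq {K : Type*} [Field K] {a b c s k D : K}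
    (hD : D ≠ 0) (hs : s ≠ 0) (h : a * (b - c / D) / s = k) :
    D * (a * b - k * s) = a * c := by
  field_simp at h
  linear_combination h

/-- Every complex root of the Drude dispersion equation `ε_m(ω)/ε_s = k`
with `k ≤ 0` has strictly negative imaginary part. -/
theorem drude_root_im_neg
    (ε0 εinf ωP Γ εs : ℝ) (hε0 : 0 < ε0) (hεinf : 0 < εinf) (hωP : 0 < ωP)
    (hΓ : 0 < Γ) (hεs : 0 < εs) (k : ℝ) (hk : k ≤ 0)
    (ω : ℂ) (hω : ω ^ 2 + I * ω * (Γ : ℂ) ≠ 0)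
    (hroot : (ε0 : ℂ) * ((εinf : ℂ) - (ωP : ℂ) ^ 2 / (ω ^ 2 + I * ω * (Γ : ℂ))) / (εs : ℂ)
      = (k : ℂ)) :
    ω.im < 0 := by
  have hM : 0 < ε0 * εinf - k * εs := by nlinarith
  have hcleared := mul_sub_eq_of_mul_sub_div_div_eq hω (by exact_mod_cast hεs.ne') hroot
  refine im_neg_of_sq_add_I_mul_eq_pos hΓ (c := ε0 * ωP ^ 2 / (ε0 * εinf - k * εs))
    (by positivity) ?_
  push_cast
  rw [eq_div_iff (by exact_mod_cast hM.ne')]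
  exact hcleared
end

section
/- Let v, w be unit vectors in ℝ² and A_a, A_b > 1 with A_a ≥ 1 + c for some c > 0. With Ψ_a(ξ) = A_a|v·ξ|² + |v^⊥·ξ|² and Ψ_b(ξ) = A_b|w·ξ|² + |w^⊥·ξ|² on S¹, one has min(|v - w|, |v + w|)² ≤ (4/c) sup_{ξ∈S¹} |Ψ_a(ξ) - Ψ_b(ξ)|. -/
private lemma aux_min (s t : ℝ) (hst : s ^ 2 + t ^ 2 = 1) :
    min (2 - 2 * t) (2 + 2 * t) ≤ 2 * s ^ 2 := by
  rcases le_or_gt 0 t with h | h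
  · exact le_trans (min_le_left _ _) (by nlinarith [sq_nonneg s])
  · exact le_trans (min_le_right _ _) (by nlinarith [sq_nonneg s])

private lemma aux_final (m s M c Aa : ℝ) (hc : 0 < c) (hAa : 1 + c ≤ Aa)
    (hm : m ≤ 2 * s ^ 2) (key : (Aa - 1) * s ^ 2 ≤ M) (hM0 : 0 ≤ M) :
    m * c ≤ 4 * M := by
  nlinarith [sq_nonneg s, mul_le_mul_of_nonneg_right hm hc.le]

/-- Quantitative recovery of the gradient direction up to sign:
`min(|v-w|, |v+w|)² ≤ (4/c) · sup_{S¹} |Ψ_a - Ψ_b|`. -/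
theorem direction_stability (v w : ℝ × ℝ) (hv : v.1 ^ 2 + v.2 ^ 2 = 1)
    (hw : w.1 ^ 2 + w.2 ^ 2 = 1) (Aa Ab c : ℝ) (hc : 0 < c) (hAa : 1 + c ≤ Aa)
    (hAa1 : 1 < Aa) (hAb : 1 < Ab)
    (Ψa Ψb : ℝ × ℝ → ℝ)
    (hΨa : ∀ ξ, Ψa ξ = Aa * (v.1 * ξ.1 + v.2 * ξ.2) ^ 2 + (-v.2 * ξ.1 + v.1 * ξ.2) ^ 2)
    (hΨb : ∀ ξ, Ψb ξ = Ab * (w.1 * ξ.1 + w.2 * ξ.2) ^ 2 + (-w.2 * ξ.1 + w.1 * ξ.2) ^ 2) :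
    min ((v.1 - w.1) ^ 2 + (v.2 - w.2) ^ 2) ((v.1 + w.1) ^ 2 + (v.2 + w.2) ^ 2) ≤
      (4 / c) * ⨆ ξ : {ξ : ℝ × ℝ // ξ.1 ^ 2 + ξ.2 ^ 2 = 1}, |Ψa ξ - Ψb ξ| := by
  obtain ⟨t, ht⟩ : ∃ t, t = v.1 * w.1 + v.2 * w.2 := ⟨_, rfl⟩
  obtain ⟨s, hs⟩ : ∃ s, s = v.1 * w.2 - v.2 * w.1 := ⟨_, rfl⟩
  have hst : s ^ 2 + t ^ 2 = 1 := by
    rw [hs, ht]; linear_combination (w.1 ^ 2 + w.2 ^ 2) * hv + hw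
  have e1 : (v.1 - w.1) ^ 2 + (v.2 - w.2) ^ 2 = 2 - 2 * t := by
    rw [ht]; linear_combination hv + hw
  have e2 : (v.1 + w.1) ^ 2 + (v.2 + w.2) ^ 2 = 2 + 2 * t := by
    rw [ht]; linear_combination hv + hw
  obtain ⟨M, hM⟩ : ∃ M, M = ⨆ ξ : {ξ : ℝ × ℝ // ξ.1 ^ 2 + ξ.2 ^ 2 = 1}, |Ψa ξ - Ψb ξ| :=
    ⟨_, rfl⟩
  have hbdd : BddAbove (Set.range fun ξ : {ξ : ℝ × ℝ // ξ.1 ^ 2 + ξ.2 ^ 2 = 1} =>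
      |Ψa ξ - Ψb ξ|) := by
    refine ⟨Aa + Ab + 2, ?_⟩
    rintro x ⟨⟨⟨x1, x2⟩, hx⟩, rfl⟩
    simp only [hΨa, hΨb]
    have h1 : (v.1 * x1 + v.2 * x2) ^ 2 ≤ 1 := by nlinarith [sq_nonneg (v.1 * x2 - v.2 * x1)]
    have h2 : (-v.2 * x1 + v.1 * x2) ^ 2 ≤ 1 := by nlinarith [sq_nonneg (v.1 * x1 + v.2 * x2)]
    have h3 : (w.1 * x1 + w.2 * x2) ^ 2 ≤ 1 := by nlinarith [sq_nonneg (w.1 * x2 - w.2 * x1)]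
    have h4 : (-w.2 * x1 + w.1 * x2) ^ 2 ≤ 1 := by nlinarith [sq_nonneg (w.1 * x1 + w.2 * x2)]
    have pAa : (0:ℝ) ≤ Aa := by linarith
    have pAb : (0:ℝ) ≤ Ab := by linarith
    have u1 : Aa * (v.1 * x1 + v.2 * x2) ^ 2 ≤ Aa := by
      calc Aa * (v.1 * x1 + v.2 * x2) ^ 2 ≤ Aa * 1 := mul_le_mul_of_nonneg_left h1 pAa
        _ = Aa := mul_one Aa
    have u3 : Ab * (w.1 * x1 + w.2 * x2) ^ 2 ≤ Ab := by
      calc Ab * (w.1 * x1 + w.2 * x2) ^ 2 ≤ Ab * 1 := mul_le_mul_of_nonneg_left h3 pAb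
        _ = Ab := mul_one Ab
    have n1 : 0 ≤ Aa * (v.1 * x1 + v.2 * x2) ^ 2 := mul_nonneg pAa (sq_nonneg _)
    have n3 : 0 ≤ Ab * (w.1 * x1 + w.2 * x2) ^ 2 := mul_nonneg pAb (sq_nonneg _)
    have n2 : 0 ≤ (-v.2 * x1 + v.1 * x2) ^ 2 := sq_nonneg _
    have n4 : 0 ≤ (-w.2 * x1 + w.1 * x2) ^ 2 := sq_nonneg _
    rw [abs_le]
    constructor <;> linarith
  have hξ0 : (-w.2) ^ 2 + w.1 ^ 2 = 1 := by linarith [hw]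
  have ξ0 : {ξ : ℝ × ℝ // ξ.1 ^ 2 + ξ.2 ^ 2 = 1} := ⟨(-w.2, w.1), hξ0⟩
  have hval' : Ψa (-w.2, w.1) - Ψb (-w.2, w.1) = (Aa - 1) * s ^ 2 := by
    rw [hΨa, hΨb, hs]
    linear_combination (w.1 ^ 2 + w.2 ^ 2) * hv - (w.1 ^ 2 + w.2 ^ 2) * hw
  have hval : |Ψa ((⟨(-w.2, w.1), hξ0⟩ : {ξ : ℝ × ℝ // ξ.1 ^ 2 + ξ.2 ^ 2 = 1}) : ℝ × ℝ) -
      Ψb ((⟨(-w.2, w.1), hξ0⟩ : {ξ : ℝ × ℝ // ξ.1 ^ 2 + ξ.2 ^ 2 = 1}) : ℝ × ℝ)| =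
      (Aa - 1) * s ^ 2 := by
    show |Ψa (-w.2, w.1) - Ψb (-w.2, w.1)| = (Aa - 1) * s ^ 2
    rw [hval', abs_of_nonneg (mul_nonneg (by linarith) (sq_nonneg s))]
  have key : (Aa - 1) * s ^ 2 ≤ M := by
    rw [hM]
    exact hval ▸ le_ciSup hbdd (⟨(-w.2, w.1), hξ0⟩ : {ξ : ℝ × ℝ // ξ.1 ^ 2 + ξ.2 ^ 2 = 1})
  have hM0 : 0 ≤ M := le_trans (mul_nonneg (by linarith) (sq_nonneg s)) key
  rw [e1, e2, ← hM, div_mul_eq_mul_div, le_div_iff₀ hc]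
  exact aux_final _ s M c Aa hc hAa (aux_min s t hst) key hM0
end
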